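/- arXiv:1007.5501 — 8 statements merged into one kernel-verified Lean document; each statement's English description precedes it below -/
import Mathlib

section
/- For a binary cubic form f = a x³ + b x² y + c x y² + d y³ with integer coefficients, the multiplication table ωθ = −ad, ω² = −ac + bω − aθ, θ² = −bd + dω − cθ defines an associative commutative ring structure on the free ℤ-module ℤ·1 ⊕ ℤ·ω ⊕ ℤ·θ. -/
/-- Multiplication on the free ℤ-module `ℤ·1 ⊕ ℤ·ω ⊕ ℤ·θ` associated to the binary cubic form
`f = a x³ + b x²y + c xy² + d y³`: elements are coordinate triples `(c0, c1, c2)` with respect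
to the basis `1, ω, θ`, and multiplication is the ℤ-bilinear extension of the table
`ωθ = −ad`, `ω² = −ac + bω − aθ`, `θ² = −bd + dω − cθ`, with `1` the identity. -/
def cubicMul (a b c d : ℤ) (x y : ℤ × ℤ × ℤ) : ℤ × ℤ × ℤ :=
  let x0 := x.1; let x1 := x.2.1; let x2 := x.2.2
  let y0 := y.1; let y1 := y.2.1; let y2 := y.2.2
  ( x0*y0 + (x1*y1) * (-(a*c)) + (x1*y2 + x2*y1) * (-(a*d)) + (x2*y2) * (-(b*d)),
    x0*y1 + y0*x1 + (x1*y1) * b + (x2*y2) * d,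
    x0*y2 + y0*x2 + (x1*y1) * (-a) + (x2*y2) * (-c) )

section

variable (a b c d : ℤ)

theorem cubicMul_comm (x y : ℤ × ℤ × ℤ) : cubicMul a b c d x y = cubicMul a b c d y x := by
  simp only [cubicMul, Prod.mk.injEq]
  refine ⟨by ring, by ring, by ring⟩

theorem cubicMul_assoc (x y z : ℤ × ℤ × ℤ) :
    cubicMul a b c d (cubicMul a b c d x y) z = cubicMul a b c d x (cubicMul a b c d y z) := by
  simp only [cubicMul, Prod.mk.injEq]
  refine ⟨by ring, by ring, by ring⟩

theorem cubicMul_add (x y z : ℤ × ℤ × ℤ) :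
    cubicMul a b c d x (y + z) = cubicMul a b c d x y + cubicMul a b c d x z := by
  simp only [cubicMul, Prod.fst_add, Prod.snd_add, Prod.mk_add_mk, Prod.mk.injEq]
  refine ⟨by ring, by ring, by ring⟩

theorem cubicMul_identity_left (x : ℤ × ℤ × ℤ) : cubicMul a b c d (1, 0, 0) x = x := by
  simp only [cubicMul]
  ext <;> ring

end

/-- The multiplication table of the binary cubic form `a x³ + b x²y + c xy² + d y³` defines an
associative commutative ring structure on the free ℤ-module `ℤ·1 ⊕ ℤ·ω ⊕ ℤ·θ`. -/
theorem cubicMul_commRing (a b c d : ℤ) :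
    (∀ x y : ℤ × ℤ × ℤ, cubicMul a b c d x y = cubicMul a b c d y x) ∧
    (∀ x y z : ℤ × ℤ × ℤ,
      cubicMul a b c d (cubicMul a b c d x y) z
        = cubicMul a b c d x (cubicMul a b c d y z)) ∧
    (∀ x y z : ℤ × ℤ × ℤ,
      cubicMul a b c d x (y + z) = cubicMul a b c d x y + cubicMul a b c d x z) ∧
    (∀ x : ℤ × ℤ × ℤ, cubicMul a b c d (1, 0, 0) x = x) :=
  ⟨cubicMul_comm a b c d, cubicMul_assoc a b c d, cubicMul_add a b c d,
    cubicMul_identity_left a b c d⟩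
end

section
/- In a cubic ring C (a commutative ring that is free of rank 3 as a ℤ-module) with a chosen ℤ-module basis 1, ω, θ of C, there exist unique lifts ω' ∈ ω + ℤ and θ' ∈ θ + ℤ of the images of ω and θ in C/ℤ such that ω'θ' ∈ ℤ·1. -/
/-! Write `ωθ = c₀ + c₁ω + c₂θ` in the basis `1, ω, θ`. Then
`(ω + m)(θ + n) = (c₀ + mn) + (c₁ + n)ω + (c₂ + m)θ`, which lies in `ℤ` exactly when
`m = -c₂` and `n = -c₁`. -/

open Module Basis

lemma add_algebraMap_mul_add_algebraMap {R A : Type*} [CommSemiring R] [Semiring A]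
    [Algebra R A] (x y : A) (m n : R) :
    (x + algebraMap R A m) * (y + algebraMap R A n) =
      x * y + n • x + m • y + algebraMap R A (m * n) := by
  rw [add_mul, mul_add, mul_add, Algebra.smul_def, Algebra.smul_def, ← Algebra.commutes n x,
    map_mul]
  abel

section

variable {R A : Type*} [CommRing R] [Ring A] [Algebra R A]

lemma Module.Basis.mem_range_algebraMap_iff {ι : Type*} (b : Basis ι R A) {i₀ : ι}
    (hb : b i₀ = 1) {x : A} :
    x ∈ Set.range (algebraMap R A) ↔ ∀ j ≠ i₀, b.repr x j = 0 := by
  constructor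
  · rintro ⟨r, rfl⟩ j hj
    rw [repr_algebraMap hb, Finsupp.single_eq_of_ne hj]
  · intro h
    refine ⟨b.repr x i₀, b.repr.injective ?_⟩
    ext j
    rw [repr_algebraMap hb]
    by_cases hj : j = i₀
    · rw [hj, Finsupp.single_eq_same]
    · rw [Finsupp.single_eq_of_ne hj, h j hj]

lemma translate_mul_translate_mem_range_algebraMap_iff (b : Basis (Fin 3) R A) (hb : b 0 = 1)
    (m n : R) :
    (b 1 + algebraMap R A m) * (b 2 + algebraMap R A n) ∈ Set.range (algebraMap R A) ↔
      b.repr (b 1 * b 2) 1 + n = 0 ∧ b.repr (b 1 * b 2) 2 + m = 0 := by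
  rw [b.mem_range_algebraMap_iff hb, add_algebraMap_mul_add_algebraMap]
  simp only [map_add, map_smul, repr_self, repr_algebraMap hb]
  simp [Fin.forall_fin_succ]

theorem existsUnique_translate_mul_translate_mem_range_algebraMap (b : Basis (Fin 3) R A)
    (hb : b 0 = 1) :
    ∃! p : R × R,
      (b 1 + algebraMap R A p.1) * (b 2 + algebraMap R A p.2) ∈ Set.range (algebraMap R A) := by
  set c := b.repr (b 1 * b 2)
  refine ⟨(-c 2, -c 1), ?_, ?_⟩
  · exact (translate_mul_translate_mem_range_algebraMap_iff b hb _ _).2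
      ⟨add_neg_cancel _, add_neg_cancel _⟩
  · rintro ⟨m, n⟩ hp
    obtain ⟨hn, hm⟩ := (translate_mul_translate_mem_range_algebraMap_iff b hb m n).1 hp
    exact Prod.ext (eq_neg_of_add_eq_zero_right hm) (eq_neg_of_add_eq_zero_right hn)

end

/-- In a cubic ring `C` (a commutative ring free of rank 3 as a ℤ-module) with a chosen
ℤ-module basis `1, ω, θ`, there are unique integer translates `ω' = ω + m` and `θ' = θ + n`
(the lifts of the images of `ω`, `θ` in `C/ℤ`) whose product `ω'θ'` lies in `ℤ·1`. -/
theorem cubic_ring_unique_normalized_basis (C : Type*) [CommRing C]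
    (b : Module.Basis (Fin 3) ℤ C) (hb : b 0 = 1) :
    ∃! p : ℤ × ℤ, ∃ k : ℤ, (b 1 + (p.1 : C)) * (b 2 + (p.2 : C)) = (k : C) := by
  simpa [Set.mem_range, eq_comm] using
    existsUnique_translate_mul_translate_mem_range_algebraMap b hb
end

section
/- The stabilizer of A₀ in SL₃(ℤ), under the action X ↦ X A₀ Xᵗ, is exactly the image of the homomorphism ρ : GL₂(ℤ) → SL₃(ℤ); that is, every X ∈ SL₃(ℤ) with X A₀ Xᵗ = A₀ equals ρ(g) for some g ∈ GL₂(ℤ). -/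
/-!
Put `J₀ = -2 A₀`, the integral form with `u J₀ vᵀ = u₀v₁ + u₁v₀ - 2u₂v₂`, so that `X` fixes `A₀`
iff `X J₀ Xᵀ = J₀`, i.e. iff the rows `X₀, X₁, X₂` of `X` pair under `J₀` as the unit vectors do.
As `det X = 1`, every row is primitive. The rows `X₀` and `X₁` are isotropic, and a primitive
solution of `xy = z²` is `±(p², q², pq)`; so `X₀ = ±(d², c², dc)` and `X₁ = ±(b², a², ab)`, and
their pairing `±(ad - bc)² = 1` forces equal signs and `ad - bc = ±1`. The row `X₂` is orthogonal
to `X₀` and `X₁`, hence a multiple of `(2bd, 2ac, ad + bc)`, and `det X = 1` pins the multiple down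
to `ad - bc`. So `X = diag(ε, ε, ad - bc) · rhoMat a b c d`, which is `ρ` of `[[a, b], [c, d]]`
or of `[[a, b], [-c, -d]]` according to the sign `ε`.
-/

open Matrix

noncomputable def A0 : Matrix (Fin 3) (Fin 3) ℚ :=
  !![0, -1/2, 0; -1/2, 0, 0; 0, 0, 1]

theorem Matrix.dvd_det_of_forall_dvd_row {n R : Type*} [Fintype n] [DecidableEq n] [CommRing R]
    (M : Matrix n n R) (i : n) {k : R} (hk : ∀ j, k ∣ M i j) : k ∣ M.det := by
  choose r hr using hk
  rw [← M.updateRow_eq_self i, show M i = k • r from funext hr, det_updateRow_smul]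
  exact dvd_mul_right _ _

theorem Int.exists_sign_mul_sq_of_mul_eq_sq {x y z : ℤ} (h : x * y = z ^ 2)
    (hprim : ∀ k : ℤ, k ∣ x → k ∣ y → k ∣ z → IsUnit k) :
    ∃ ε p q : ℤ, (ε = 1 ∨ ε = -1) ∧ x = ε * p ^ 2 ∧ y = ε * q ^ 2 ∧ z = ε * (p * q) := by
  have hgcd : Int.gcd x y = 1 := by
    have hz : (Int.gcd x y : ℤ) ∣ z := by
      rw [← Int.pow_dvd_pow_iff two_ne_zero, ← h, sq]
      exact mul_dvd_mul (Int.gcd_dvd_left x y) (Int.gcd_dvd_right x y)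
    exact Nat.isUnit_iff.mp <| Int.ofNat_isUnit.mp <|
      hprim _ (Int.gcd_dvd_left x y) (Int.gcd_dvd_right x y) hz
  obtain ⟨p, hp⟩ := Int.sq_of_gcd_eq_one hgcd h
  obtain ⟨q, hq⟩ := Int.sq_of_gcd_eq_one (Int.gcd_comm x y ▸ hgcd) (mul_comm x y ▸ h)
  have of_sign (ε : ℤ) (hε : ε = 1 ∨ ε = -1) (hx : x = ε * p ^ 2) (hy : y = ε * q ^ 2) :
      ∃ ε p q : ℤ, (ε = 1 ∨ ε = -1) ∧ x = ε * p ^ 2 ∧ y = ε * q ^ 2 ∧ z = ε * (p * q) := by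
    have hz : z ^ 2 = (ε * (p * q)) ^ 2 := by rw [← h, hx, hy]; ring
    rcases sq_eq_sq_iff_eq_or_eq_neg.mp hz with hz | hz
    · exact ⟨ε, p, q, hε, hx, hy, hz⟩
    · exact ⟨ε, p, -q, hε, hx, by rw [hy, neg_sq], by rw [hz]; ring⟩
  -- If `x` and `y` get opposite signs, `xy = z²` forces `pq = 0`; a zero square takes either sign.
  rcases hp with hp | hp <;> rcases hq with hq | hq
  · exact of_sign 1 (.inl rfl) (by rw [hp, one_mul]) (by rw [hq, one_mul])
  · rcases mul_eq_zero.mp (show p * q = 0 by nlinarith [sq_nonneg z, sq_nonneg (p * q)])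
      with h0 | h0
    · exact of_sign (-1) (.inr rfl) (by rw [hp, h0]; ring) (by rw [hq]; ring)
    · exact of_sign 1 (.inl rfl) (by rw [hp]; ring) (by rw [hq, h0]; ring)
  · rcases mul_eq_zero.mp (show p * q = 0 by nlinarith [sq_nonneg z, sq_nonneg (p * q)])
      with h0 | h0
    · exact of_sign 1 (.inl rfl) (by rw [hp, h0]; ring) (by rw [hq]; ring)
    · exact of_sign (-1) (.inr rfl) (by rw [hp]; ring) (by rw [hq, h0]; ring)
  · exact of_sign (-1) (.inr rfl) (by rw [hp]; ring) (by rw [hq]; ring)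

def J0 : Matrix (Fin 3) (Fin 3) ℤ := !![0, 1, 0; 1, 0, 0; 0, 0, -2]

def bilinJ0 (u v : Fin 3 → ℤ) : ℤ := u 0 * v 1 + u 1 * v 0 - 2 * (u 2 * v 2)

theorem bilinJ0_smul_left (s : ℤ) (u v : Fin 3 → ℤ) : bilinJ0 (s • u) v = s * bilinJ0 u v := by
  simp only [bilinJ0, Pi.smul_apply, smul_eq_mul]; ring

theorem mul_J0_mul_transpose_apply (X : Matrix (Fin 3) (Fin 3) ℤ) (i j : Fin 3) :
    (X * J0 * Xᵀ) i j = bilinJ0 (X i) (X j) := by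
  simp only [J0, bilinJ0, mul_apply, transpose_apply, Fin.sum_univ_three, of_apply, cons_val',
    cons_val_zero, cons_val_one, cons_val, cons_val_fin_one, Fin.isValue]
  ring

theorem A0_eq_smul_J0 : A0 = (-1/2 : ℚ) • J0.map (Int.cast : ℤ → ℚ) := by
  ext i j; fin_cases i <;> fin_cases j <;> norm_num [A0, J0]

theorem mul_J0_mul_transpose_eq_of_stab {X : Matrix (Fin 3) (Fin 3) ℤ}
    (h : X.map (Int.cast : ℤ → ℚ) * A0 * (X.map (Int.cast : ℤ → ℚ))ᵀ = A0) :
    X * J0 * Xᵀ = J0 := by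
  rw [A0_eq_smul_J0, Matrix.mul_smul, Matrix.smul_mul] at h
  have hmap (M N : Matrix (Fin 3) (Fin 3) ℤ) :
      (M * N).map (Int.cast : ℤ → ℚ) = M.map Int.cast * N.map Int.cast :=
    Matrix.map_mul (f := Int.castRingHom ℚ)
  apply map_injective (Int.cast_injective (α := ℚ))
  change (X * J0 * Xᵀ).map _ = J0.map _
  rw [hmap, hmap, transpose_map]
  exact smul_right_injective _ (by norm_num : (-1/2 : ℚ) ≠ 0) h

def rhoMat (a b c d : ℤ) : Matrix (Fin 3) (Fin 3) ℤ :=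
  !![d^2, c^2, d*c; b^2, a^2, a*b; 2*b*d, 2*a*c, a*d + b*c]

theorem det_rhoMat (a b c d : ℤ) : (rhoMat a b c d).det = (a*d - b*c) ^ 3 := by
  rw [det_fin_three]
  simp only [rhoMat, of_apply, cons_val', cons_val_zero, cons_val_one, cons_val, cons_val_fin_one,
    Fin.isValue]
  ring

theorem exists_rhoMat_rows_eq {u v : Fin 3 → ℤ} (hu : bilinJ0 u u = 0) (hv : bilinJ0 v v = 0)
    (huv : bilinJ0 u v = 1) (hu_prim : ∀ k : ℤ, (∀ i, k ∣ u i) → IsUnit k)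
    (hv_prim : ∀ k : ℤ, (∀ i, k ∣ v i) → IsUnit k) :
    ∃ a b c d ε : ℤ, (ε = 1 ∨ ε = -1) ∧ (a*d - b*c) ^ 2 = 1 ∧
      u = ε • rhoMat a b c d 0 ∧ v = ε • rhoMat a b c d 1 := by
  have prim {w : Fin 3 → ℤ} (hw : ∀ k : ℤ, (∀ i, k ∣ w i) → IsUnit k) (k : ℤ)
      (h0 : k ∣ w 0) (h1 : k ∣ w 1) (h2 : k ∣ w 2) : IsUnit k :=
    hw k (fun i => by fin_cases i <;> assumption)
  obtain ⟨ε, d, c, hε, hu0, hu1, hu2⟩ :=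
    Int.exists_sign_mul_sq_of_mul_eq_sq (by rw [bilinJ0] at hu; linarith) (prim hu_prim)
  obtain ⟨ε', b, a, hε', hv0, hv1, hv2⟩ :=
    Int.exists_sign_mul_sq_of_mul_eq_sq (by rw [bilinJ0] at hv; linarith) (prim hv_prim)
  have hprod : ε * ε' * (a*d - b*c) ^ 2 = 1 := by
    rw [bilinJ0, hu0, hu1, hu2, hv0, hv1, hv2] at huv; linear_combination huv
  have hδ : (a*d - b*c) ^ 2 = 1 := Int.eq_one_of_mul_eq_one_left (sq_nonneg _) hprod
  have hε' : ε' = ε := by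
    rw [hδ, mul_one] at hprod
    rcases hε with rfl | rfl <;> linarith
  rw [hε'] at hv0 hv1 hv2
  refine ⟨a, b, c, d, ε, hε, hδ, ?_, ?_⟩ <;>
    funext i <;> fin_cases i <;> simp [rhoMat, hu0, hu1, hu2, hv0, hv1, hv2, mul_comm]

theorem exists_eq_smul_rhoMat_two {a b c d : ℤ} (hδ : (a*d - b*c) ^ 2 = 1) {w : Fin 3 → ℤ}
    (h0 : bilinJ0 (rhoMat a b c d 0) w = 0) (h1 : bilinJ0 (rhoMat a b c d 1) w = 0) :
    ∃ t : ℤ, w = t • rhoMat a b c d 2 := by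
  simp only [bilinJ0, rhoMat, of_apply, cons_val', cons_val_zero, cons_val_one, cons_val,
    cons_val_fin_one, Fin.isValue] at h0 h1
  refine ⟨(a*d + b*c) * w 2 - a*c * w 0 - b*d * w 1, ?_⟩
  funext i
  fin_cases i <;>
    simp only [rhoMat, Pi.smul_apply, smul_eq_mul, of_apply, cons_val', cons_val_zero, cons_val_one,
      cons_val, cons_val_fin_one, Fin.isValue, Fin.zero_eta, Fin.mk_one, Fin.reduceFinMk]
  · linear_combination b^2 * h0 + d^2 * h1 - w 0 * hδ
  · linear_combination a^2 * h0 + c^2 * h1 - w 1 * hδ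
  · linear_combination a*b * h0 + c*d * h1 - w 2 * hδ

theorem exists_eq_diagonal_mul_rhoMat {X : Matrix (Fin 3) (Fin 3) ℤ} (hX : X.det = 1)
    (hJ : X * J0 * Xᵀ = J0) :
    ∃ a b c d ε : ℤ, (ε = 1 ∨ ε = -1) ∧ (a*d - b*c = 1 ∨ a*d - b*c = -1) ∧
      X = diagonal ![ε, ε, a*d - b*c] * rhoMat a b c d := by
  have hbilin (i j : Fin 3) : bilinJ0 (X i) (X j) = J0 i j := by
    rw [← mul_J0_mul_transpose_apply, hJ]
  have hprim (i : Fin 3) (k : ℤ) (hk : ∀ j, k ∣ X i j) : IsUnit k :=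
    isUnit_of_dvd_one (hX ▸ X.dvd_det_of_forall_dvd_row i hk)
  obtain ⟨a, b, c, d, ε, hε, hδ, h0, h1⟩ :=
    exists_rhoMat_rows_eq (hbilin 0 0) (hbilin 1 1) (hbilin 0 1) (hprim 0) (hprim 1)
  have hε0 : ε ≠ 0 := by rcases hε with rfl | rfl <;> norm_num
  have horth (i : Fin 3) (hi : X i = ε • rhoMat a b c d i) (h : J0 i 2 = 0) :
      bilinJ0 (rhoMat a b c d i) (X 2) = 0 := by
    have := hbilin i 2
    rwa [hi, bilinJ0_smul_left, h, mul_eq_zero, or_iff_right hε0] at this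
  obtain ⟨t, h2⟩ := exists_eq_smul_rhoMat_two hδ (horth 0 h0 rfl) (horth 1 h1 rfl)
  have hXt : X = diagonal ![ε, ε, t] * rhoMat a b c d := by
    ext i j
    fin_cases i
    · simp [h0]
    · simp [h1]
    · simp [h2]
  have hdet : ε * ε * t * (a*d - b*c) ^ 3 = 1 := by
    rw [← hX, hXt, det_mul, det_diagonal, det_rhoMat, Fin.prod_univ_three]; rfl
  have hδ' := sq_eq_one_iff.mp hδ
  have ht : t = a*d - b*c := by
    rcases hε with rfl | rfl <;> rcases hδ' with h | h <;> rw [h] at hdet ⊢ <;> linarith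
  exact ⟨a, b, c, d, ε, hε, hδ', ht ▸ hXt⟩

theorem diagonal_mul_rhoMat_neg (a b c d s : ℤ) :
    diagonal ![-s, -s, s] * rhoMat a b c d = (-s) • rhoMat a b (-c) (-d) := by
  ext i j
  fin_cases i <;> fin_cases j <;>
    simp only [rhoMat, diagonal_mul, Matrix.smul_apply, smul_eq_mul, of_apply, cons_val',
      cons_val_zero, cons_val_one, cons_val, cons_val_fin_one, Fin.isValue, Fin.zero_eta,
      Fin.mk_one, Fin.reduceFinMk] <;>
    ring

/-- The stabilizer of `A₀` in `SL₃(ℤ)` under `X ↦ X A₀ Xᵀ` is exactly the image of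
`ρ : GL₂(ℤ) → SL₃(ℤ)`: every `X ∈ SL₃(ℤ)` with `X A₀ Xᵀ = A₀` equals
`ρ([[a,b],[c,d]]) = (1/(ad−bc))·[[d²,c²,dc],[b²,a²,ab],[2bd,2ac,ad+bc]]`
for some `[[a,b],[c,d]] ∈ GL₂(ℤ)` (and `1/(ad−bc) = ad−bc` since `ad−bc = ±1`). -/
theorem stab_A0_eq_image_rho (X : Matrix (Fin 3) (Fin 3) ℤ) (hX : X.det = 1)
    (hstab : (X.map (Int.cast : ℤ → ℚ)) * A0 * (X.map (Int.cast : ℤ → ℚ))ᵀ = A0) :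
    ∃ a b c d : ℤ, (a*d - b*c = 1 ∨ a*d - b*c = -1) ∧
      X = (a*d - b*c) •
        !![d^2, c^2, d*c; b^2, a^2, a*b; 2*b*d, 2*a*c, a*d + b*c] := by
  obtain ⟨a, b, c, d, ε, hε, hδ, hXeq⟩ :=
    exists_eq_diagonal_mul_rhoMat hX (mul_J0_mul_transpose_eq_of_stab hstab)
  have hsign : ε = a*d - b*c ∨ ε = -(a*d - b*c) := by
    rcases hε with rfl | rfl <;> rcases hδ with h | h <;> rw [h] <;> norm_num
  rcases hsign with rfl | rfl
  · refine ⟨a, b, c, d, hδ, ?_⟩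
    rw [hXeq]
    ext i j; fin_cases i <;> simp [rhoMat]
  · have hδ' : a * -d - b * -c = -(a*d - b*c) := by ring
    refine ⟨a, b, -c, -d, ?_, ?_⟩
    · rw [hδ', neg_eq_iff_eq_neg, neg_eq_iff_eq_neg, neg_neg]
      exact hδ.symm
    · rw [hXeq, diagonal_mul_rhoMat_neg, hδ']
      rfl
end

section
/- Every integer-valued ternary quadratic form A (a 3×3 symmetric matrix with integer diagonal entries and half-integer off-diagonal entries) with det(A) = −1/4 is SL₃(ℤ)-equivalent to A₀ = [[0, −1/2, 0],[−1/2, 0, 0],[0, 0, 1]]; i.e., there exists g ∈ SL₃(ℤ) with g A gᵗ = A₀. -/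
open Matrix

/-!
Write `2A = B + Bᵀ` with `B` integral and upper triangular, so that `q(v) = vᵀ B v` is the
form and `S = B + Bᵀ` is an even symmetric integral matrix with `det S = -2`.

Hermite's reduction: move a vector of minimal `|q|` to the first basis position, complete the
square in the first variable, and bound the complementary binary form by the binary Hermite
inequality `3 q_min² ≤ 4 |disc|`. This gives `v ≠ 0` with `27 |vᵀ S v|³ ≤ 64 |det S| = 128`,
and since `vᵀ S v = 2 q(v)`, `v` is isotropic. With `v` (made primitive) as first basis vector,
`S` has first row `(0, b, c)` and `det S = -2` reads `b² f - b c e + c² d = 1`, a Bézout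
relation for `b, c`; an explicit change of basis then splits off the hyperbolic plane, leaving
`⟨2⟩`.
-/

section QuadraticValue

variable {n R : Type*} [Fintype n] [CommRing R]

theorem Matrix.mul_mul_transpose_apply (g S : Matrix n n R) (i j : n) :
    (g * S * gᵀ) i j = g i ⬝ᵥ S *ᵥ g j := by
  simp only [mul_apply, dotProduct, mulVec, transpose_apply, Finset.sum_mul, Finset.mul_sum]
  rw [Finset.sum_comm]
  simp only [mul_comm, mul_left_comm]

theorem Matrix.dotProduct_mul_mul_transpose_mulVec (g S : Matrix n n R) (v : n → R) :
    v ⬝ᵥ (g * S * gᵀ) *ᵥ v = (gᵀ *ᵥ v) ⬝ᵥ S *ᵥ (gᵀ *ᵥ v) := by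
  rw [← mulVec_mulVec, ← mulVec_mulVec, dotProduct_mulVec, mulVec_transpose]

theorem Matrix.smul_dotProduct_mulVec_smul (S : Matrix n n R) (k : R) (v : n → R) :
    (k • v) ⬝ᵥ S *ᵥ (k • v) = k ^ 2 * (v ⬝ᵥ S *ᵥ v) := by
  rw [mulVec_smul, smul_dotProduct, dotProduct_smul, smul_eq_mul, smul_eq_mul, sq, mul_assoc]

theorem Matrix.dotProduct_add_transpose_mulVec (B : Matrix n n R) (v : n → R) :
    v ⬝ᵥ (B + Bᵀ) *ᵥ v = 2 * (v ⬝ᵥ B *ᵥ v) := by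
  rw [add_mulVec, dotProduct_add, mulVec_transpose, dotProduct_comm v (v ᵥ* B),
    ← dotProduct_mulVec, two_mul]

theorem Matrix.IsSymm.mul_mul_transpose {S : Matrix n n R} (hS : S.IsSymm) (g : Matrix n n R) :
    (g * S * gᵀ).IsSymm := by
  rw [IsSymm, transpose_mul, transpose_mul, transpose_transpose, hS.eq, Matrix.mul_assoc]

end QuadraticValue

theorem Int.exists_two_mul_abs_mul_add_le_abs (a b : ℤ) (ha : a ≠ 0) :
    ∃ x : ℤ, 2 * |a * x + b| ≤ |a| := by
  set x := round (-b / a : ℚ)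
  refine ⟨x, ?_⟩
  have hround := abs_sub_round (-b / a : ℚ)
  have hx : ((a * x + b : ℤ) : ℚ) = -a * (-b / a - x) := by
    push_cast
    field_simp
    ring
  have : 2 * |((a * x + b : ℤ) : ℚ)| ≤ |(a : ℚ)| := by
    rw [hx, abs_mul, abs_neg]
    nlinarith [abs_nonneg (a : ℚ)]
  exact_mod_cast this

theorem Int.exists_mem_forall_abs_le {α : Type*} (f : α → ℤ) {s : Set α} (hs : s.Nonempty) :
    ∃ x ∈ s, ∀ y ∈ s, |f x| ≤ |f y| := by
  refine ⟨Function.argminOn (fun x => (f x).natAbs) s hs, Function.argminOn_mem _ s hs,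
    fun y hy => ?_⟩
  rw [Int.abs_eq_natAbs, Int.abs_eq_natAbs]
  exact_mod_cast Function.argminOn_le (fun x => (f x).natAbs) s hy

/-- Hermite's step, with `m` the minimum of `|q|`: `m² ≤ m |q| = |s² + r| ≤ m²/4 + |r|`. -/
theorem three_mul_sq_le_of_mul_eq_sq_add {m a q s r : ℤ} (ha : |a| = m) (hq : m ≤ |q|)
    (hs : 2 * |s| ≤ m) (h : a * q = s ^ 2 + r) : 3 * m ^ 2 ≤ 4 * |r| := by
  have hm : 0 ≤ m := ha ▸ abs_nonneg a
  have h1 : m * |q| ≤ s ^ 2 + |r| := by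
    rw [← ha, ← abs_mul, h]
    exact (abs_add_le _ _).trans (by rw [abs_sq])
  nlinarith [abs_nonneg s, sq_abs s, mul_le_mul_of_nonneg_left hq hm]

theorem exists_det_eq_one_smul_row_zero_fin_two (v : Fin 2 → ℤ) :
    ∃ (k : ℤ) (g : Matrix (Fin 2) (Fin 2) ℤ), g.det = 1 ∧ v = k • g 0 := by
  rcases eq_or_ne (Int.gcd (v 0) (v 1)) 0 with h0 | h0
  · obtain ⟨h0, h1⟩ := Int.gcd_eq_zero_iff.mp h0
    refine ⟨0, 1, det_one, ?_⟩
    ext i; fin_cases i <;> simp [h0, h1]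
  · obtain ⟨a, ha⟩ := Int.gcd_dvd_left (v 0) (v 1)
    obtain ⟨b, hb⟩ := Int.gcd_dvd_right (v 0) (v 1)
    set x := Int.gcdA (v 0) (v 1)
    set y := Int.gcdB (v 0) (v 1)
    have hab : a * x + b * y = 1 := by
      apply mul_left_cancel₀ (Int.natCast_ne_zero.mpr h0)
      linear_combination (Int.gcd_eq_gcd_ab (v 0) (v 1)).symm - x * ha - y * hb
    refine ⟨Int.gcd (v 0) (v 1), !![a, b; -y, x], ?_, ?_⟩
    · rw [det_fin_two_of]; linear_combination hab
    · ext i; fin_cases i <;> simp [← ha, ← hb]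

theorem exists_det_eq_one_smul_row_zero_fin_three (v : Fin 3 → ℤ) :
    ∃ (k : ℤ) (g : Matrix (Fin 3) (Fin 3) ℤ), g.det = 1 ∧ v = k • g 0 := by
  obtain ⟨l, h, hh, hvh⟩ := exists_det_eq_one_smul_row_zero_fin_two ![v 1, v 2]
  obtain ⟨k, g, hg, hvg⟩ := exists_det_eq_one_smul_row_zero_fin_two ![v 0, l]
  refine ⟨k, !![g 0 0, g 0 1, 0; g 1 0, g 1 1, 0; 0, 0, 1] *
    !![1, 0, 0; 0, h 0 0, h 0 1; 0, h 1 0, h 1 1], ?_, ?_⟩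
  · rw [det_mul, det_fin_three, det_fin_three]
    rw [det_fin_two] at hg hh
    simp [hg, hh]
  · have e0 := congrFun hvg 0
    have e1 := congrFun hvg 1
    have f0 := congrFun hvh 0
    have f1 := congrFun hvh 1
    simp only [cons_val_zero, cons_val_one, cons_val_fin_one, Pi.smul_apply, smul_eq_mul]
      at e0 e1 f0 f1
    ext i; fin_cases i <;> simp [e0, e1, f0, f1] <;> ring

section Minimum

variable {n : Type*} [Fintype n]

theorem exists_ne_zero_forall_abs_dotProduct_mulVec_le [Nonempty n] (S : Matrix n n ℤ) :
    ∃ v ≠ 0, ∀ w ≠ 0, |v ⬝ᵥ S *ᵥ v| ≤ |w ⬝ᵥ S *ᵥ w| :=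
  Int.exists_mem_forall_abs_le (fun v => v ⬝ᵥ S *ᵥ v) (exists_ne 0)

theorem abs_mul_mul_transpose_apply_self_eq {S g : Matrix n n ℤ} {v : n → ℤ} {k : ℤ} {i : n}
    (hv : v = k • g i) (hv0 : v ≠ 0) (hmin : ∀ w ≠ 0, |v ⬝ᵥ S *ᵥ v| ≤ |w ⬝ᵥ S *ᵥ w|) :
    |(g * S * gᵀ) i i| = |v ⬝ᵥ S *ᵥ v| := by
  have hk : k ≠ 0 := by rintro rfl; simp [hv] at hv0
  have hgi : g i ≠ 0 := by rintro h; simp [hv, h] at hv0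
  rw [mul_mul_transpose_apply]
  refine le_antisymm ?_ (hmin _ hgi)
  rw [hv, smul_dotProduct_mulVec_smul, abs_mul, abs_sq]
  exact le_mul_of_one_le_left (abs_nonneg _) (by nlinarith [sq_abs k, Int.one_le_abs hk])

theorem mulVec_ne_zero_of_det_eq_one [DecidableEq n] {g : Matrix n n ℤ} (hg : g.det = 1)
    {x : n → ℤ} (hx : x ≠ 0) : g *ᵥ x ≠ 0 :=
  fun h => hx (eq_zero_of_mulVec_eq_zero (by simp [hg]) h)

end Minimum

theorem exists_ne_zero_sq_le_abs_det_fin_two {S : Matrix (Fin 2) (Fin 2) ℤ} (hS : S.IsSymm) :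
    ∃ v ≠ 0, 3 * (v ⬝ᵥ S *ᵥ v) ^ 2 ≤ 4 * |S.det| := by
  obtain ⟨v, hv0, hmin⟩ := exists_ne_zero_forall_abs_dotProduct_mulVec_le S
  refine ⟨v, hv0, ?_⟩
  rw [← sq_abs]
  rcases eq_or_ne (v ⬝ᵥ S *ᵥ v) 0 with h0 | h0
  · rw [h0, abs_zero]; positivity
  obtain ⟨k, g, hg, hvg⟩ := exists_det_eq_one_smul_row_zero_fin_two v
  set T := g * S * gᵀ with hT
  have hT00 : |T 0 0| = |v ⬝ᵥ S *ᵥ v| := abs_mul_mul_transpose_apply_self_eq hvg hv0 hmin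
  have hT0 : T 0 0 ≠ 0 := fun h => h0 (abs_eq_zero.mp (by rw [← hT00, h, abs_zero]))
  have hT10 : T 1 0 = T 0 1 := (hS.mul_mul_transpose g).apply 0 1
  have hdet : T.det = S.det := by simp [hT, det_mul, hg]
  obtain ⟨x, hx⟩ := Int.exists_two_mul_abs_mul_add_le_abs (T 0 0) (T 0 1) hT0
  have hw := mulVec_ne_zero_of_det_eq_one (g := gᵀ) (by simp [hg]) (x := ![x, 1]) (by simp)
  have key : T 0 0 * ((gᵀ *ᵥ ![x, 1]) ⬝ᵥ S *ᵥ (gᵀ *ᵥ ![x, 1])) =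
      (T 0 0 * x + T 0 1) ^ 2 + S.det := by
    rw [← dotProduct_mul_mul_transpose_mulVec, ← hT, ← hdet, det_fin_two]
    simp only [dotProduct, mulVec, Fin.sum_univ_two, cons_val_zero, cons_val_one, cons_val_fin_one,
      hT10]
    ring
  rw [hT00] at hx
  exact three_mul_sq_le_of_mul_eq_sq_add hT00 (hmin _ hw) hx key

section SchurComplement

variable {R : Type*} [CommRing R]

def scaledSchurComplement (T : Matrix (Fin 3) (Fin 3) R) : Matrix (Fin 2) (Fin 2) R :=
  !![T 0 0 * T 1 1 - T 0 1 ^ 2, T 0 0 * T 1 2 - T 0 1 * T 0 2;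
     T 0 0 * T 1 2 - T 0 1 * T 0 2, T 0 0 * T 2 2 - T 0 2 ^ 2]

theorem isSymm_scaledSchurComplement (T : Matrix (Fin 3) (Fin 3) R) :
    (scaledSchurComplement T).IsSymm :=
  IsSymm.ext fun i j => by fin_cases i <;> fin_cases j <;> rfl

theorem Matrix.IsSymm.det_scaledSchurComplement {T : Matrix (Fin 3) (Fin 3) R} (hT : T.IsSymm) :
    (scaledSchurComplement T).det = T 0 0 * T.det := by
  rw [scaledSchurComplement, det_fin_two_of, det_fin_three, hT.apply 0 1, hT.apply 0 2,
    hT.apply 1 2]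
  ring

theorem Matrix.IsSymm.mul_dotProduct_mulVec_eq_sq_add {T : Matrix (Fin 3) (Fin 3) R}
    (hT : T.IsSymm) (x : R) (y : Fin 2 → R) :
    T 0 0 * (![x, y 0, y 1] ⬝ᵥ T *ᵥ ![x, y 0, y 1]) =
      (T 0 0 * x + (T 0 1 * y 0 + T 0 2 * y 1)) ^ 2 + y ⬝ᵥ scaledSchurComplement T *ᵥ y := by
  simp only [scaledSchurComplement, dotProduct, mulVec, Fin.sum_univ_two, Fin.sum_univ_three,
    of_apply, cons_val', cons_val, cons_val_zero, cons_val_one, cons_val_fin_one, hT.apply 0 1,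
    hT.apply 0 2, hT.apply 1 2]
  ring

end SchurComplement

theorem exists_ne_zero_abs_pow_three_le_abs_det_fin_three {S : Matrix (Fin 3) (Fin 3) ℤ}
    (hS : S.IsSymm) : ∃ v ≠ 0, 27 * |v ⬝ᵥ S *ᵥ v| ^ 3 ≤ 64 * |S.det| := by
  obtain ⟨v, hv0, hmin⟩ := exists_ne_zero_forall_abs_dotProduct_mulVec_le S
  refine ⟨v, hv0, ?_⟩
  set m := |v ⬝ᵥ S *ᵥ v|
  rcases eq_or_ne m 0 with h0 | h0
  · rw [h0]; positivity
  obtain ⟨k, g, hg, hvg⟩ := exists_det_eq_one_smul_row_zero_fin_three v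
  set T := g * S * gᵀ with hT
  have hT00 : |T 0 0| = m := abs_mul_mul_transpose_apply_self_eq hvg hv0 hmin
  have hT0 : T 0 0 ≠ 0 := fun h => h0 (by rw [← hT00, h, abs_zero])
  have hdet : T.det = S.det := by simp [hT, det_mul, hg]
  have hTS : T.IsSymm := hS.mul_mul_transpose g
  obtain ⟨y, hy0, hy⟩ := exists_ne_zero_sq_le_abs_det_fin_two (isSymm_scaledSchurComplement T)
  rw [hTS.det_scaledSchurComplement, hdet, abs_mul, hT00] at hy
  obtain ⟨x, hx⟩ :=
    Int.exists_two_mul_abs_mul_add_le_abs (T 0 0) (T 0 1 * y 0 + T 0 2 * y 1) hT0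
  rw [hT00] at hx
  have hxy : ![x, y 0, y 1] ≠ 0 := fun h => hy0 <| by
    ext i; fin_cases i
    exacts [congrFun h 1, congrFun h 2]
  have hw := mulVec_ne_zero_of_det_eq_one (g := gᵀ) (by simp [hg]) hxy
  have key : T 0 0 * ((gᵀ *ᵥ ![x, y 0, y 1]) ⬝ᵥ S *ᵥ (gᵀ *ᵥ ![x, y 0, y 1])) =
      (T 0 0 * x + (T 0 1 * y 0 + T 0 2 * y 1)) ^ 2 + y ⬝ᵥ scaledSchurComplement T *ᵥ y := by
    rw [← dotProduct_mul_mul_transpose_mulVec]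
    exact hTS.mul_dotProduct_mulVec_eq_sq_add x y
  have hm := three_mul_sq_le_of_mul_eq_sq_add hT00 (hmin _ hw) hx key
  have hmpos : 0 < m := lt_of_le_of_ne (abs_nonneg _) h0.symm
  have hm4 : 9 * m ^ 4 ≤ 16 * (y ⬝ᵥ scaledSchurComplement T *ᵥ y) ^ 2 := by
    nlinarith [sq_abs (y ⬝ᵥ scaledSchurComplement T *ᵥ y)]
  nlinarith

theorem exists_ne_zero_dotProduct_mulVec_eq_zero_of_abs_det_le_two
    (B : Matrix (Fin 3) (Fin 3) ℤ) (hdet : |(B + Bᵀ).det| ≤ 2) :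
    ∃ v ≠ 0, v ⬝ᵥ B *ᵥ v = 0 := by
  obtain ⟨v, hv0, hv⟩ :=
    exists_ne_zero_abs_pow_three_le_abs_det_fin_three (isSymm_add_transpose_self B)
  refine ⟨v, hv0, ?_⟩
  rw [dotProduct_add_transpose_mulVec, abs_mul, abs_two] at hv
  by_contra hq
  nlinarith [one_le_pow₀ (n := 3) (Int.one_le_abs hq)]

theorem exists_det_eq_one_conj_eq_of_apply_zero_zero_eq_zero {C : Matrix (Fin 3) (Fin 3) ℤ}
    (h00 : C 0 0 = 0) (hdet : (C + Cᵀ).det = -2) :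
    ∃ g : Matrix (Fin 3) (Fin 3) ℤ, g.det = 1 ∧
      g * (C + Cᵀ) * gᵀ = !![0, -1, 0; -1, 0, 0; 0, 0, 2] := by
  set b := C 0 1 + C 1 0
  set c := C 0 2 + C 2 0
  set e := C 1 2 + C 2 1
  set d := C 1 1
  set f := C 2 2
  have hC : C + Cᵀ = !![0, b, c; b, 2 * d, e; c, e, 2 * f] := by
    ext i j; fin_cases i <;> fin_cases j <;> simp [h00, b, c, e, d, f] <;> ring
  clear_value b c e d f
  have hbc : b ^ 2 * f - b * c * e + c ^ 2 * d = 1 := by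
    rw [hC, det_fin_three] at hdet
    simp only [of_apply, cons_val', cons_val, cons_val_zero, cons_val_one, cons_val_fin_one] at hdet
    exact mul_left_cancel₀ two_ne_zero (by linear_combination -hdet)
  -- `det (C + Cᵀ) = -2` is itself a Bézout relation for `b` and `c`
  obtain ⟨u, v, huv⟩ : ∃ u v, b * u + c * v = 1 :=
    ⟨b * f - c * e, c * d, by linear_combination hbc⟩
  set δ := d * u ^ 2 + e * u * v + f * v ^ 2
  set ε := b * e * u + 2 * b * f * v - 2 * c * d * u - c * e * v
  have hsplit :
      !![1, 0, 0; 0, -u, -v; 0, c, -b] * (C + Cᵀ) * !![1, 0, 0; 0, -u, -v; 0, c, -b]ᵀ =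
        !![0, -1, 0; -1, 2 * δ, ε; 0, ε, 2] := by
    rw [hC]
    ext i j; fin_cases i <;> fin_cases j <;> simp [mul_apply, Fin.sum_univ_three, δ, ε]
    all_goals first | ring1 | linear_combination -huv | linear_combination 2 * hbc
  have hclear : !![1, 0, 0; δ, 1, 0; ε, 0, 1] * !![0, -1, 0; -1, 2 * δ, ε; 0, ε, 2] *
      !![1, 0, 0; δ, 1, 0; ε, 0, 1]ᵀ = !![0, -1, 0; -1, 0, 0; 0, 0, 2] := by
    ext i j; fin_cases i <;> fin_cases j <;> simp [mul_apply, Fin.sum_univ_three]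
    all_goals ring
  refine ⟨!![1, 0, 0; δ, 1, 0; ε, 0, 1] * !![1, 0, 0; 0, -u, -v; 0, c, -b], ?_, ?_⟩
  · rw [det_mul, det_fin_three, det_fin_three]
    simp only [of_apply, cons_val', cons_val, cons_val_zero, cons_val_one, cons_val_fin_one]
    linear_combination huv
  · rw [transpose_mul, ← hclear, ← hsplit]
    simp only [Matrix.mul_assoc]

theorem exists_det_eq_one_conj_add_transpose_eq (B : Matrix (Fin 3) (Fin 3) ℤ)
    (hdet : (B + Bᵀ).det = -2) :
    ∃ g : Matrix (Fin 3) (Fin 3) ℤ, g.det = 1 ∧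
      g * (B + Bᵀ) * gᵀ = !![0, -1, 0; -1, 0, 0; 0, 0, 2] := by
  obtain ⟨v, hv0, hv⟩ :=
    exists_ne_zero_dotProduct_mulVec_eq_zero_of_abs_det_le_two B (by rw [hdet]; norm_num)
  obtain ⟨k, g, hg, rfl⟩ := exists_det_eq_one_smul_row_zero_fin_three v
  set C := g * B * gᵀ
  have hC00 : C 0 0 = 0 := by
    have hk : k ≠ 0 := by rintro rfl; simp at hv0
    rw [smul_dotProduct_mulVec_smul] at hv
    exact (mul_mul_transpose_apply g B 0 0).trans
      ((mul_eq_zero.mp hv).resolve_left (pow_ne_zero 2 hk))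
  have hconj : g * (B + Bᵀ) * gᵀ = C + Cᵀ := by
    simp [C, Matrix.mul_add, Matrix.add_mul, transpose_mul, Matrix.mul_assoc]
  obtain ⟨h, hh, hhC⟩ := exists_det_eq_one_conj_eq_of_apply_zero_zero_eq_zero hC00
    (by rw [← hconj, det_mul, det_mul, det_transpose, hg, hdet]; ring)
  refine ⟨h * g, by rw [det_mul, hh, hg, one_mul], ?_⟩
  rw [← hhC, ← hconj, transpose_mul]
  simp only [Matrix.mul_assoc]

/-- Every integer-valued ternary quadratic form (a symmetric 3×3 matrix with integer diagonal
entries and half-integer off-diagonal entries) of determinant `−1/4` is `SL₃(ℤ)`-equivalent to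
`A₀`: there is `g ∈ SL₃(ℤ)` with `g A gᵀ = A₀`. -/
theorem ternary_form_det_neg_quarter_equiv_A0 (a11 a12 a13 a22 a23 a33 : ℤ) :
    let A : Matrix (Fin 3) (Fin 3) ℚ :=
      !![(a11:ℚ), (a12:ℚ)/2, (a13:ℚ)/2;
         (a12:ℚ)/2, (a22:ℚ), (a23:ℚ)/2;
         (a13:ℚ)/2, (a23:ℚ)/2, (a33:ℚ)]
    A.det = -1/4 →
      ∃ g : Matrix (Fin 3) (Fin 3) ℤ, g.det = 1 ∧
        (g.map (Int.cast : ℤ → ℚ)) * A * (g.map (Int.cast : ℤ → ℚ))ᵀ = A0 := by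
  intro A hdet
  set B : Matrix (Fin 3) (Fin 3) ℤ := !![a11, a12, a13; 0, a22, a23; 0, 0, a33]
  have hA : A = (2⁻¹ : ℚ) • (B + Bᵀ).map (Int.cast : ℤ → ℚ) := by
    ext i j; fin_cases i <;> fin_cases j <;> simp [A, B] <;> ring
  have hdetB : (B + Bᵀ).det = -2 := by
    rw [hA, det_smul, ← Int.cast_det, Fintype.card_fin] at hdet
    exact_mod_cast (by linarith : (((B + Bᵀ).det : ℤ) : ℚ) = -2)
  obtain ⟨g, hg, hgB⟩ := exists_det_eq_one_conj_add_transpose_eq B hdetB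
  have hmap : g.map Int.cast * (B + Bᵀ).map Int.cast * (g.map Int.cast)ᵀ =
      (g * (B + Bᵀ) * gᵀ).map (Int.cast : ℤ → ℚ) := by
    simp [← Int.coe_castRingHom, Matrix.map_mul, transpose_map]
  refine ⟨g, hg, ?_⟩
  rw [hA, Matrix.mul_smul, Matrix.smul_mul, hmap, hgB]
  ext i j; fin_cases i <;> fin_cases j <;> norm_num [A0]
end

section
/- The determinant binary cubic of the pair (A₀, B'_f), where B'_f = [[f4, f2/6, f3/2],[f2/6, f0, f1/2],[f3/2, f1/2, 2f2/3]], equals −x³ + (I/3)·x y² − (J/27)·y³, where I = 12 f0 f4 − 3 f1 f3 + f2² and J = 72 f0 f2 f4 − 2 f2³ − 27 f0 f3² − 27 f4 f1² + 9 f1 f2 f3. -/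
open Matrix

/-- The twisted matrix `B'_f = [[f4, f2/6, f3/2], [f2/6, f0, f1/2], [f3/2, f1/2, 2f2/3]]` of the
binary quartic form `f = f0 x⁴ + f1 x³y + f2 x²y² + f3 xy³ + f4 y⁴`. -/
noncomputable def Bf' (f0 f1 f2 f3 f4 : ℤ) : Matrix (Fin 3) (Fin 3) ℚ :=
  !![(f4:ℚ), (f2:ℚ)/6, (f3:ℚ)/2;
     (f2:ℚ)/6, (f0:ℚ), (f1:ℚ)/2;
     (f3:ℚ)/2, (f1:ℚ)/2, 2*(f2:ℚ)/3]

theorem Matrix.det_fin_three_of {R : Type*} [CommRing R] (a b c d e f g h i : R) :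
    !![a, b, c; d, e, f; g, h, i].det
      = a * e * i - a * f * h - b * d * i + b * f * g + c * d * h - c * e * g := by
  simp [det_fin_three]

theorem smul_A0_sub_smul_Bf' (f0 f1 f2 f3 f4 : ℤ) (x y : ℚ) :
    x • A0 - y • Bf' f0 f1 f2 f3 f4 =
      !![-y * f4, -x / 2 - y * f2 / 6, -y * f3 / 2;
         -x / 2 - y * f2 / 6, -y * f0, -y * f1 / 2;
         -y * f3 / 2, -y * f1 / 2, x - 2 * y * f2 / 3] := by
  ext i j
  fin_cases i <;> fin_cases j <;> simp [A0, Bf'] <;> ring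

/-- The determinant binary cubic of the pair `(A₀, B'_f)` equals
`−x³ + (I/3)·x y² − (J/27)·y³`, where `I = 12 f0 f4 − 3 f1 f3 + f2²` and
`J = 72 f0 f2 f4 − 2 f2³ − 27 f0 f3² − 27 f4 f1² + 9 f1 f2 f3`. -/
theorem det_cubic_of_canonical_pair (f0 f1 f2 f3 f4 : ℤ) :
    let I : ℚ := 12*(f0:ℚ)*(f4:ℚ) - 3*(f1:ℚ)*(f3:ℚ) + (f2:ℚ)^2
    let J : ℚ := 72*(f0:ℚ)*(f2:ℚ)*(f4:ℚ) - 2*(f2:ℚ)^3 - 27*(f0:ℚ)*(f3:ℚ)^2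
      - 27*(f4:ℚ)*(f1:ℚ)^2 + 9*(f1:ℚ)*(f2:ℚ)*(f3:ℚ)
    ∀ x y : ℚ,
      4 * (x • A0 - y • Bf' f0 f1 f2 f3 f4).det
        = -x^3 + (I/3) * x * y^2 - (J/27) * y^3 := by
  intro I J x y
  rw [smul_A0_sub_smul_Bf', det_fin_three_of]
  ring
end

section
/- The map from N-classes of binary cubic forms with x³-coefficient −1 to N_{1/3}-classes is injective: if two binary cubic forms −x³ + b x²y + c xy² + d y³ and −x³ + b' x²y + c' xy² + d' y³ with integer coefficients are related by the action of a lower-triangular unipotent matrix [[1,0],[k/3,1]] with k ∈ ℤ, then 3 divides k (hence they are already N-equivalent). -/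
/-!
Comparing the `y³`-coefficients (i.e. evaluating at `(x, y) = (0, 1)`) shows that `k / 3` is a root
of the monic integer cubic `t³ - b t² - c t + (d' - d)`. Clearing denominators gives
`3 ∣ k³`, hence `3 ∣ k` since `3` is prime.
-/

theorem Prime.dvd_of_div_isRoot_monic_cubic {p k a b c : ℤ} (hp : Prime p)
    (h : ((k : ℚ) / p) ^ 3 + a * ((k : ℚ) / p) ^ 2 + b * ((k : ℚ) / p) + c = 0) : p ∣ k := by
  have hp₀ : (p : ℚ) ≠ 0 := Int.cast_ne_zero.mpr hp.ne_zero
  have hk : k ^ 3 = p * -(a * k ^ 2 + b * p * k + c * p ^ 2) := by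
    field_simp at h
    exact_mod_cast (by linear_combination h : (k : ℚ) ^ 3 = p * -(a * k ^ 2 + b * p * k + c * p ^ 2))
  exact hp.dvd_of_dvd_pow ⟨_, hk⟩

/-- Injectivity of the map from `N`-classes of binary cubic forms with `x³`-coefficient `−1` to
`N_{1/3}`-classes: if the cubic forms `−x³ + b x²y + c xy² + d y³` and
`−x³ + b' x²y + c' xy² + d' y³` (all coefficients integers) are related by the action of the
unipotent matrix `[[1,0],[k/3,1]]` with `k ∈ ℤ`, i.e.
`−(x + (k/3)y)³ + b(x + (k/3)y)²y + c(x + (k/3)y)y² + dy³ = −x³ + b'x²y + c'xy² + d'y³`,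
then `3 ∣ k`. -/
theorem N_to_N_third_injective (b c d b' c' d' k : ℤ)
    (h : ∀ x y : ℚ,
      -(x + ((k:ℚ)/3)*y)^3 + (b:ℚ)*(x + ((k:ℚ)/3)*y)^2*y
        + (c:ℚ)*(x + ((k:ℚ)/3)*y)*y^2 + (d:ℚ)*y^3
      = -x^3 + (b':ℚ)*x^2*y + (c':ℚ)*x*y^2 + (d':ℚ)*y^3) :
    (3 : ℤ) ∣ k := by
  have hy : ((k : ℚ) / (3 : ℤ)) ^ 3 + ((-b : ℤ) : ℚ) * ((k : ℚ) / (3 : ℤ)) ^ 2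
      + ((-c : ℤ) : ℚ) * ((k : ℚ) / (3 : ℤ)) + ((d' - d : ℤ) : ℚ) = 0 := by
    push_cast
    linear_combination -h 0 1
  exact Int.prime_three.dvd_of_div_isRoot_monic_cubic hy
end

section
/- In the cubic ring R_f associated to the binary cubic form f = ax³ + bx²y + cxy² + dy³ (with multiplication ωθ = −ad, ω² = −ac + bω − aθ, θ² = −bd + dω − cθ), the discriminant of the basis 1, ω, θ (the determinant of the trace form matrix (Tr(ζiζj))) equals the discriminant b²c² − 4ac³ − 4b³d − 27a²d² + 18abcd of the cubic form f. -/
/-- The trace of multiplication by `r` on `R_f`, computed as the trace of the matrix of the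
multiplication-by-`r` map in the basis `1, ω, θ`. -/
def cubicTr (a b c d : ℤ) (r : ℤ × ℤ × ℤ) : ℤ :=
  (cubicMul a b c d r (1,0,0)).1 + (cubicMul a b c d r (0,1,0)).2.1
    + (cubicMul a b c d r (0,0,1)).2.2

/-- The basis `ζ₁, ζ₂, ζ₃ = 1, ω, θ` of `R_f`. -/
def cubicBasis : Fin 3 → ℤ × ℤ × ℤ := ![(1,0,0), (0,1,0), (0,0,1)]

/-!
The trace is the linear form `Tr(x₀ + x₁ω + x₂θ) = 3x₀ + b x₁ − c x₂`, read off from the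
diagonals of multiplication by `ω` and `θ`. So the trace form matrix only needs the traces of
`ω² = −ac + bω − aθ`, `ωθ = −ad` and `θ² = −bd + dω − cθ`, and its determinant expands to
`Disc(f)`.
-/

theorem cubicTr_apply (a b c d x₀ x₁ x₂ : ℤ) :
    cubicTr a b c d (x₀, x₁, x₂) = 3 * x₀ + b * x₁ - c * x₂ := by
  simp only [cubicTr, cubicMul]
  ring

theorem cubicTr_mul_cubicBasis (a b c d : ℤ) :
    (Matrix.of fun i j : Fin 3 =>
      cubicTr a b c d (cubicMul a b c d (cubicBasis i) (cubicBasis j)))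
      = !![3, b, -c; b, b^2 - 2*a*c, -3*a*d; -c, -3*a*d, c^2 - 2*b*d] := by
  ext i j
  fin_cases i <;> fin_cases j <;>
    simp [cubicBasis, cubicMul, cubicTr_apply] <;> ring

theorem det_cubic_trace_form (a b c d : ℤ) :
    (!![3, b, -c; b, b^2 - 2*a*c, -3*a*d; -c, -3*a*d, c^2 - 2*b*d] :
      Matrix (Fin 3) (Fin 3) ℤ).det
      = b^2*c^2 - 4*a*c^3 - 4*b^3*d - 27*a^2*d^2 + 18*a*b*c*d := by
  simp [Matrix.det_fin_three]
  ring

/-- The discriminant of the cubic ring `R_f` with respect to the basis `1, ω, θ` — the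
determinant of the trace form matrix `(Tr(ζᵢζⱼ))` — equals the discriminant
`b²c² − 4ac³ − 4b³d − 27a²d² + 18abcd` of the binary cubic form `f = ax³ + bx²y + cxy² + dy³`. -/
theorem cubic_ring_disc_eq_disc_form (a b c d : ℤ) :
    (Matrix.of fun i j : Fin 3 =>
      cubicTr a b c d (cubicMul a b c d (cubicBasis i) (cubicBasis j))).det
      = b^2*c^2 - 4*a*c^3 - 4*b^3*d - 27*a^2*d^2 + 18*a*b*c*d := by
  rw [cubicTr_mul_cubicBasis, det_cubic_trace_form]
end

section
/- The map Ψ̄ sending a binary quartic form f to the class (A₀, B_f + ℤA₀) is equivariant for the GL₂(ℤ)-actions: for every g = (a b; c d) ∈ GL₂(ℤ) and every binary quartic form f, writing (g ∘ f)(x,y) = f(ax+cy, bx+dy) and Y = (ad−bc)ρ(g), one has Y(B_f + ℤA₀)Yᵗ = B_{g∘f} + ℤA₀. -/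
open Matrix

/-- The matrix `B_f = [[f4, 0, f3/2], [0, f0, f1/2], [f3/2, f1/2, f2]]` of the binary quartic
form `f = f0 x⁴ + f1 x³y + f2 x²y² + f3 xy³ + f4 y⁴`. -/
noncomputable def Bf (f0 f1 f2 f3 f4 : ℤ) : Matrix (Fin 3) (Fin 3) ℚ :=
  !![(f4:ℚ), 0, (f3:ℚ)/2; 0, (f0:ℚ), (f1:ℚ)/2; (f3:ℚ)/2, (f1:ℚ)/2, (f2:ℚ)]

set_option maxHeartbeats 2000000 in
/-- Equivariance of `Ψ̄`: for `g = [[a,b],[c,d]] ∈ GL₂(ℤ)` with unscaled matrix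
`Y = (ad−bc)ρ(g) = [[d²,c²,dc],[b²,a²,ab],[2bd,2ac,ad+bc]]`, and `g ∘ f` the binary quartic
form `(g∘f)(x,y) = f(ax+cy, bx+dy)` with coefficients `g0,…,g4`, one has
`Y(B_f + ℤA₀)Yᵀ = B_{g∘f} + ℤA₀`:  indeed `Y A₀ Yᵀ = A₀` and `Y B_f Yᵀ` differs from
`B_{g∘f}` by an integer multiple of `A₀`. -/
theorem psi_bar_equivariant (a b c d : ℤ) (h : a*d - b*c = 1 ∨ a*d - b*c = -1)
    (f0 f1 f2 f3 f4 g0 g1 g2 g3 g4 : ℤ)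
    (hg : ∀ x y : ℚ,
      (g0:ℚ)*x^4 + (g1:ℚ)*x^3*y + (g2:ℚ)*x^2*y^2 + (g3:ℚ)*x*y^3 + (g4:ℚ)*y^4
        = (f0:ℚ)*((a:ℚ)*x + (c:ℚ)*y)^4
          + (f1:ℚ)*((a:ℚ)*x + (c:ℚ)*y)^3*((b:ℚ)*x + (d:ℚ)*y)
          + (f2:ℚ)*((a:ℚ)*x + (c:ℚ)*y)^2*((b:ℚ)*x + (d:ℚ)*y)^2
          + (f3:ℚ)*((a:ℚ)*x + (c:ℚ)*y)*((b:ℚ)*x + (d:ℚ)*y)^3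
          + (f4:ℚ)*((b:ℚ)*x + (d:ℚ)*y)^4) :
    let Y : Matrix (Fin 3) (Fin 3) ℚ :=
      !![(d:ℚ)^2, (c:ℚ)^2, (d:ℚ)*(c:ℚ);
         (b:ℚ)^2, (a:ℚ)^2, (a:ℚ)*(b:ℚ);
         2*(b:ℚ)*(d:ℚ), 2*(a:ℚ)*(c:ℚ), (a:ℚ)*(d:ℚ) + (b:ℚ)*(c:ℚ)]
    Y * A0 * Yᵀ = A0 ∧
    ∃ m : ℤ, Y * Bf f0 f1 f2 f3 f4 * Yᵀ = Bf g0 g1 g2 g3 g4 + (m:ℚ) • A0 := by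
  intro Y
  have hd : ((a:ℚ)*d - (b:ℚ)*c)^2 = 1 := by
    have : ((a*d - b*c : ℤ) : ℚ)^2 = 1 := by
      rcases h with h | h <;> rw [h] <;> norm_num
    push_cast at this
    linarith [this]
  have e10 := hg 1 0
  have e01 := hg 0 1
  have e11 := hg 1 1
  have e1m1 := hg 1 (-1)
  have e21 := hg 2 1
  have hg0 : (g0:ℚ) = f0*a^4 + f1*a^3*b + f2*a^2*b^2 + f3*a*b^3 + f4*b^4 := by
    linear_combination e10
  have hg4 : (g4:ℚ) = f0*(c:ℚ)^4 + f1*c^3*d + f2*c^2*d^2 + f3*c*d^3 + f4*d^4 := by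
    linear_combination e01
  have hg1 : (g1:ℚ) = 4*f0*(a:ℚ)^3*c + f1*(3*(a:ℚ)^2*b*c + a^3*d)
      + 2*f2*((a:ℚ)*b^2*c + a^2*b*d) + f3*((b:ℚ)^3*c + 3*a*b^2*d) + 4*f4*(b:ℚ)^3*d := by
    linear_combination (-2)*e10 + (1/2)*e01 + (-1/2)*e11 + (-1/6)*e1m1 + (1/6)*e21
  have hg3 : (g3:ℚ) = 4*f0*(a:ℚ)*c^3 + f1*((b:ℚ)*c^3 + 3*a*c^2*d)
      + 2*f2*((a:ℚ)*c*d^2 + b*c^2*d) + f3*((a:ℚ)*d^3 + 3*b*c*d^2) + 4*f4*(b:ℚ)*d^3 := by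
    linear_combination 2*e10 + (-1/2)*e01 + e11 + (-1/3)*e1m1 + (-1/6)*e21
  have hg2 : (g2:ℚ) = 6*f0*(a:ℚ)^2*c^2 + f1*(3*(a:ℚ)^2*c*d + 3*a*b*c^2)
      + f2*((a:ℚ)^2*d^2 + 4*a*b*c*d + b^2*c^2) + f3*(3*(a:ℚ)*b*d^2 + 3*b^2*c*d)
      + 6*f4*(b:ℚ)^2*d^2 := by
    linear_combination (-1)*e10 + (-1)*e01 + (1/2)*e11 + (1/2)*e1m1
  constructor
  · have hY : Y = !![(d:ℚ)^2, (c:ℚ)^2, (d:ℚ)*(c:ℚ);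
         (b:ℚ)^2, (a:ℚ)^2, (a:ℚ)*(b:ℚ);
         2*(b:ℚ)*(d:ℚ), 2*(a:ℚ)*(c:ℚ), (a:ℚ)*(d:ℚ) + (b:ℚ)*(c:ℚ)] := rfl
    have hYT : Yᵀ = !![(d:ℚ)^2, (b:ℚ)^2, 2*(b:ℚ)*(d:ℚ);
         (c:ℚ)^2, (a:ℚ)^2, 2*(a:ℚ)*(c:ℚ);
         (d:ℚ)*(c:ℚ), (a:ℚ)*(b:ℚ), (a:ℚ)*(d:ℚ) + (b:ℚ)*(c:ℚ)] := by
      ext i j; fin_cases i <;> fin_cases j <;> rfl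
    rw [hYT, hY]
    simp only [A0, Matrix.mul_fin_three]
    ext i j
    fin_cases i <;> fin_cases j <;>
      simp [Matrix.vecHead, Matrix.vecTail] <;>
      first
        | linear_combination hd
        | linear_combination -hd
        | linear_combination hd/2
        | linear_combination -hd/2
        | ring
        | rfl
  · refine ⟨-(2*f0*a^2*c^2 + f1*a^2*c*d + f1*a*b*c^2 + 2*f2*a*b*c*d
        + f3*a*b*d^2 + f3*b^2*c*d + 2*f4*b^2*d^2), ?_⟩
    have hY : Y = !![(d:ℚ)^2, (c:ℚ)^2, (d:ℚ)*(c:ℚ);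
         (b:ℚ)^2, (a:ℚ)^2, (a:ℚ)*(b:ℚ);
         2*(b:ℚ)*(d:ℚ), 2*(a:ℚ)*(c:ℚ), (a:ℚ)*(d:ℚ) + (b:ℚ)*(c:ℚ)] := rfl
    have hYT : Yᵀ = !![(d:ℚ)^2, (b:ℚ)^2, 2*(b:ℚ)*(d:ℚ);
         (c:ℚ)^2, (a:ℚ)^2, 2*(a:ℚ)*(c:ℚ);
         (d:ℚ)*(c:ℚ), (a:ℚ)*(b:ℚ), (a:ℚ)*(d:ℚ) + (b:ℚ)*(c:ℚ)] := by
      ext i j; fin_cases i <;> fin_cases j <;> rfl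
    rw [hYT, hY]
    simp only [A0, Bf, Matrix.mul_fin_three]
    ext i j
    fin_cases i <;> fin_cases j <;>
      simp [Matrix.add_apply, Matrix.smul_apply, smul_eq_mul, Matrix.vecHead, Matrix.vecTail] <;>
      push_cast <;>
      first
        | linear_combination hg0
        | linear_combination hg4
        | linear_combination hg2
        | linear_combination hg1/2
        | linear_combination hg3/2
        | linear_combination -hg0
        | linear_combination -hg4
        | linear_combination -hg2
        | linear_combination -hg1/2
        | linear_combination -hg3/2
        | ring
        | rfl
end
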